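/- Let ρ : [T0,T] → ℝ be a non-negative absolutely continuous function, let K1, K2, ε : [T0,T] → ℝ₊ be non-negative Lebesgue integrable functions, and let ϵ > 0. Suppose that ρ'(t) ≤ ε(t) + ϵ + K1(t)·ρ(t) + K2(t)·√(ρ(t))·∫_{T0}^t √(ρ(s)) ds for almost every t ∈ [T0,T]. Then for all t ∈ [T0,T] one has √(ρ(t)) ≤ √(ρ(T0)+ϵ)·exp(∫_{T0}^t (K(s)+1) ds) + (√ϵ/2)·∫_{T0}^t exp(∫_s^t (K(τ)+1) dτ) ds + 2·(√(∫_{T0}^t ε(s) ds + ϵ) − √ϵ·exp(∫_{T0}^t (K(τ)+1) dτ)) + 2·∫_{T0}^t (K(s)+1)·exp(∫_s^t (K(τ)+1) dτ)·√(∫_{T0}^s ε(τ) dτ + ϵ) ds, where K(t) := max{K1(t)/2, K2(t)/2} for almost every t ∈ [T0,T]. -/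

import Mathlib

/-!
Put `F = ∫ ε`, `y = √(ρ + F + ϵ)`, `E = √(F + ϵ)` and `κ = max (K1 / 2) (K2 / 2) + 1`. Since
`ρ ≤ y²`, `√ρ ≤ y` and `y ≥ E ≥ √ϵ`, the differential inequality gives, almost everywhere,
`y' = (ρ' + ε) / (2 y) ≤ ε / E + √ϵ / 2 + (κ - 1) (y + ∫ y)`. As `(2 E)' = ε / E`, the function
`Z = y + ∫ y - 2 E` satisfies the linear inequality `Z' ≤ √ϵ / 2 + 2 κ E + κ Z`, and Gronwall's
lemma (with integrating factor `exp (-∫ κ)`) bounds `Z`; finally `√ρ ≤ y ≤ Z + 2 E`. All these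
functions are absolutely continuous, so the fundamental theorem of calculus applies to them.
-/

open MeasureTheory Set Filter
open scoped NNReal

namespace AbsolutelyContinuousOnInterval

variable {X : Type*} [PseudoMetricSpace X] {a b : ℝ}

theorem congr {f g : ℝ → X} (hf : AbsolutelyContinuousOnInterval f a b)
    (hfg : EqOn f g (uIcc a b)) : AbsolutelyContinuousOnInterval g a b := by
  refine Tendsto.congr' ?_ hf
  filter_upwards [mem_inf_of_right (mem_principal_self _)] with E hE
  exact Finset.sum_congr rfl fun i hi ↦ by rw [hfg (hE.1 i hi).1, hfg (hE.1 i hi).2]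

theorem _root_.absolutelyContinuousOnInterval_const (c : X) (a b : ℝ) :
    AbsolutelyContinuousOnInterval (fun _ ↦ c) a b :=
  (LipschitzWith.const c).lipschitzOnWith.absolutelyContinuousOnInterval

theorem _root_.LipschitzOnWith.comp_absolutelyContinuousOnInterval {Y : Type*}
    [PseudoMetricSpace Y] {φ : X → Y} {K : ℝ≥0} {s : Set X} {f : ℝ → X}
    (hφ : LipschitzOnWith K φ s) (hf : AbsolutelyContinuousOnInterval f a b)
    (hfs : MapsTo f (uIcc a b) s) : AbsolutelyContinuousOnInterval (φ ∘ f) a b := by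
  have hKf := Tendsto.const_mul (K : ℝ) hf
  rw [mul_zero] at hKf
  refine squeeze_zero' (Eventually.of_forall fun _ ↦ Finset.sum_nonneg fun _ _ ↦ dist_nonneg) ?_
    hKf
  filter_upwards [mem_inf_of_right (mem_principal_self _)] with E hE
  rw [Finset.mul_sum]
  gcongr with i hi
  exact hφ.dist_le_mul _ (hfs (hE.1 i hi).1) _ (hfs (hE.1 i hi).2)

theorem comp_contDiffOn {φ f : ℝ → ℝ} {s : Set ℝ} (hφ : ContDiffOn ℝ 1 φ s)
    (hf : AbsolutelyContinuousOnInterval f a b) (hfs : MapsTo f (uIcc a b) s) :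
    AbsolutelyContinuousOnInterval (φ ∘ f) a b := by
  have hcompact : IsCompact (f '' uIcc a b) := isCompact_uIcc.image_of_continuousOn hf.continuousOn
  have hconvex : Convex ℝ (f '' uIcc a b) :=
    Real.convex_iff_isPreconnected.2 (isPreconnected_uIcc.image f hf.continuousOn)
  obtain ⟨K, hK⟩ :=
    (hφ.mono hfs.image_subset).exists_lipschitzOnWith one_ne_zero hconvex hcompact
  exact hK.comp_absolutelyContinuousOnInterval hf (mapsTo_image f _)

theorem le_of_ae_deriv_nonneg {f : ℝ → ℝ} (hab : a ≤ b)
    (hf : AbsolutelyContinuousOnInterval f a b) (hderiv : ∀ᵐ x, x ∈ Icc a b → 0 ≤ deriv f x) :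
    f a ≤ f b := by
  have := intervalIntegral.integral_nonneg_of_ae_restrict hab
    ((ae_restrict_iff' measurableSet_Icc).2 hderiv)
  linarith [hf.integral_deriv_eq_sub]

theorem le_gronwall_of_ae_deriv_le {z κ f : ℝ → ℝ} (hab : a ≤ b)
    (hz : AbsolutelyContinuousOnInterval z a b) (hκ : IntervalIntegrable κ volume a b)
    (hf : IntervalIntegrable f volume a b)
    (hderiv : ∀ᵐ x, x ∈ Icc a b → deriv z x ≤ f x + κ x * z x) :
    z b ≤ z a * Real.exp (∫ x in a..b, κ x) + ∫ s in a..b, Real.exp (∫ x in s..b, κ x) * f s := by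
  set B : ℝ → ℝ := fun s ↦ ∫ x in a..s, κ x
  -- With the integrating factor `g`, `(∫ f g) - z g` is nondecreasing.
  set g : ℝ → ℝ := fun s ↦ Real.exp (-B s)
  have hB : AbsolutelyContinuousOnInterval B a b :=
    hκ.absolutelyContinuousOnInterval_intervalIntegral left_mem_uIcc
  have hg : AbsolutelyContinuousOnInterval g a b :=
    hB.fun_neg.comp_contDiffOn (φ := Real.exp) (f := fun s ↦ -B s)
      Real.contDiff_exp.contDiffOn (mapsTo_univ _ _)
  have hfg : IntervalIntegrable (fun s ↦ f s * g s) volume a b :=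
    hf.mul_continuousOn hg.continuousOn
  have hmono : (∫ u in a..a, f u * g u) - z a * g a ≤ (∫ u in a..b, f u * g u) - z b * g b := by
    refine ((hfg.absolutelyContinuousOnInterval_intervalIntegral left_mem_uIcc).fun_sub
      (hz.fun_mul hg)).le_of_ae_deriv_nonneg hab ?_
    filter_upwards [hz.ae_differentiableAt, hκ.ae_hasDerivAt_integral,
      hfg.ae_hasDerivAt_integral, hderiv] with x hzx hBx hIx hx hxI
    have hxu : x ∈ uIcc a b := Icc_subset_uIcc hxI
    have hgx : HasDerivAt g (Real.exp (-B x) * -κ x) x := (hBx hxu a left_mem_uIcc).neg.exp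
    rw [((hIx hxu a left_mem_uIcc).fun_sub ((hzx hxu).hasDerivAt.fun_mul hgx)).deriv]
    have := mul_le_mul_of_nonneg_right (hx hxI) (Real.exp_pos (-B x)).le
    simp only [g]
    linarith
  have hfactor : ∀ s ∈ uIcc a b,
      Real.exp (∫ x in s..b, κ x) * f s = Real.exp (B b) * (f s * g s) := by
    intro s hs
    rw [← intervalIntegral.integral_interval_sub_left hκ (hκ.mono_set (uIcc_subset_uIcc_left hs))]
    simp only [g, B, sub_eq_add_neg, Real.exp_add]
    ring
  have hga : g a = 1 := by simp [g, B]
  have hgb : g b * Real.exp (B b) = 1 := by simp [g, ← Real.exp_add]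
  rw [intervalIntegral.integral_congr hfactor, intervalIntegral.integral_const_mul]
  rw [intervalIntegral.integral_same, hga] at hmono
  show z b ≤ z a * Real.exp (B b) + _
  linear_combination mul_le_mul_of_nonneg_right hmono (Real.exp_pos (B b)).le - z b * hgb

end AbsolutelyContinuousOnInterval

theorem absolutelyContinuousOnInterval_of_eq_integral {f f' : ℝ → ℝ} {a b : ℝ} (hab : a ≤ b)
    (hf' : IntervalIntegrable f' volume a b) (hf : ∀ x ∈ Icc a b, f x = f a + ∫ t in a..x, f' t) :
    AbsolutelyContinuousOnInterval f a b :=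
  ((absolutelyContinuousOnInterval_const (f a) a b).fun_add
    (hf'.absolutelyContinuousOnInterval_intervalIntegral left_mem_uIcc)).congr
    fun x hx ↦ (hf x (uIcc_of_le hab ▸ hx)).symm

theorem ae_hasDerivAt_of_eq_integral {f f' : ℝ → ℝ} {a b : ℝ}
    (hf' : IntervalIntegrable f' volume a b) (hf : ∀ x ∈ Icc a b, f x = f a + ∫ t in a..x, f' t) :
    ∀ᵐ x, x ∈ Icc a b → HasDerivAt f (f' x) x := by
  filter_upwards [hf'.ae_hasDerivAt_integral, (Ioo_ae_eq_Icc (a := a) (b := b)).mem_iff]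
    with x hderiv hIoo hx
  refine ((hderiv (Icc_subset_uIcc hx) a left_mem_uIcc).const_add (f a)).congr_of_eventuallyEq ?_
  filter_upwards [Icc_mem_nhds (hIoo.2 hx).1 (hIoo.2 hx).2] with s hs using hf s hs

theorem integral_nonneg_of_nonneg_on_Icc {ε : ℝ → ℝ} {a b t : ℝ}
    (hε : ∀ s ∈ Icc a b, 0 ≤ ε s) (ht : t ∈ Icc a b) : 0 ≤ ∫ τ in a..t, ε τ :=
  intervalIntegral.integral_nonneg ht.1 fun s hs ↦ hε s ⟨hs.1, hs.2.trans ht.2⟩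

-- The left side is `deriv (sqrtEnergy …)` at a point, with `y = √(r + F + ϵ)`, `E = √(F + ϵ)`.
theorem sqrt_energy_rate_le {r r' e E y ϵ k₁ k₂ I J : ℝ} (hr : 0 ≤ r) (he : 0 ≤ e) (hϵ : 0 < ϵ)
    (hk₁ : 0 ≤ k₁) (hI : 0 ≤ I) (hIJ : I ≤ J) (hE : √ϵ ≤ E) (hy : 0 ≤ y)
    (hyE : y ^ 2 = r + E ^ 2) (hr' : r' ≤ e + ϵ + k₁ * r + k₂ * √r * I) :
    (r' + e) / (2 * y) + y - 2 * (e / (2 * E)) ≤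
      √ϵ / 2 + 2 * ((max (k₁ / 2) (k₂ / 2) + 1) * E) +
        (max (k₁ / 2) (k₂ / 2) + 1) * (y + J - 2 * E) := by
  set k := max (k₁ / 2) (k₂ / 2)
  have hsqrtϵ : 0 < √ϵ := Real.sqrt_pos.2 hϵ
  have hEy : E ≤ y := by nlinarith
  have hry : √r ≤ y := Real.sqrt_le_iff.2 ⟨hy, by nlinarith⟩
  have hk : 0 ≤ k := le_max_of_le_left (by positivity)
  have hE0 : 0 < E := hsqrtϵ.trans_le hE
  have hy0 : 0 < y := hE0.trans_le hEy
  have hJ : 0 ≤ J := hI.trans hIJ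
  have hρ_term : k₁ * r ≤ 2 * k * y ^ 2 :=
    mul_le_mul (by linarith [le_max_left (k₁ / 2) (k₂ / 2)]) (by nlinarith) hr (by positivity)
  have hmemory_term : k₂ * √r * I ≤ 2 * k * y * J :=
    mul_le_mul (mul_le_mul (by linarith [le_max_right (k₁ / 2) (k₂ / 2)]) hry (Real.sqrt_nonneg _)
      (by positivity)) hIJ hI (by positivity)
  have hϵ_term : ϵ ≤ √ϵ * y := by nlinarith [Real.mul_self_sqrt hϵ.le]
  have hε_term : 2 * e ≤ e / E * (2 * y) := by
    rw [div_mul_eq_mul_div, le_div_iff₀ hE0]; nlinarith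
  have hrate : (r' + e) / (2 * y) ≤ e / E + √ϵ / 2 + k * (y + J) := by
    rw [div_le_iff₀ (by positivity)]
    linarith
  have hhalf : 2 * (e / (2 * E)) = e / E := by field_simp
  linarith

noncomputable def sqrtEnergy (a ϵ : ℝ) (ρ ε : ℝ → ℝ) (t : ℝ) : ℝ :=
  √(ρ t + (∫ τ in a..t, ε τ) + ϵ) + (∫ s in a..t, √(ρ s + (∫ τ in a..s, ε τ) + ϵ)) -
    2 * √((∫ τ in a..t, ε τ) + ϵ)

section SqrtEnergy

variable {a b ϵ : ℝ} {ρ ε : ℝ → ℝ}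

theorem AbsolutelyContinuousOnInterval.sqrtEnergy (hab : a ≤ b) (hϵ : 0 < ϵ)
    (hρ : AbsolutelyContinuousOnInterval ρ a b) (hρ_nonneg : ∀ s ∈ Icc a b, 0 ≤ ρ s)
    (hε : IntervalIntegrable ε volume a b) (hε_nonneg : ∀ s ∈ Icc a b, 0 ≤ ε s) :
    AbsolutelyContinuousOnInterval (sqrtEnergy a ϵ ρ ε) a b := by
  have hsqrt : ContDiffOn ℝ 1 Real.sqrt (Ioi 0) := fun x hx ↦
    (Real.contDiffAt_sqrt hx.ne').contDiffWithinAt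
  have hF := hε.absolutelyContinuousOnInterval_intervalIntegral left_mem_uIcc
  have hϵ_const := absolutelyContinuousOnInterval_const ϵ a b
  have hE : AbsolutelyContinuousOnInterval (fun t ↦ √((∫ τ in a..t, ε τ) + ϵ)) a b :=
    (hF.fun_add hϵ_const).comp_contDiffOn hsqrt fun t ht ↦
      add_pos_of_nonneg_of_pos (integral_nonneg_of_nonneg_on_Icc hε_nonneg (uIcc_of_le hab ▸ ht)) hϵ
  have hy : AbsolutelyContinuousOnInterval (fun t ↦ √(ρ t + (∫ τ in a..t, ε τ) + ϵ)) a b := by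
    refine ((hρ.fun_add hF).fun_add hϵ_const).comp_contDiffOn hsqrt fun t ht ↦ ?_
    rw [uIcc_of_le hab] at ht
    exact add_pos_of_nonneg_of_pos
      (add_nonneg (hρ_nonneg t ht) (integral_nonneg_of_nonneg_on_Icc hε_nonneg ht)) hϵ
  have hJ := hy.continuousOn.intervalIntegrable.absolutelyContinuousOnInterval_intervalIntegral
    left_mem_uIcc
  exact (hy.fun_add hJ).fun_sub (hE.const_mul 2)

theorem ae_deriv_sqrtEnergy_le {ρ' K₁ K₂ : ℝ → ℝ} (hϵ : 0 < ϵ)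
    (hρ : AbsolutelyContinuousOnInterval ρ a b) (hρ' : ∀ᵐ x, x ∈ Icc a b → HasDerivAt ρ (ρ' x) x)
    (hρ_nonneg : ∀ s ∈ Icc a b, 0 ≤ ρ s) (hε : IntervalIntegrable ε volume a b)
    (hε_nonneg : ∀ s ∈ Icc a b, 0 ≤ ε s) (hK₁ : ∀ s ∈ Icc a b, 0 ≤ K₁ s)
    (hineq : ∀ᵐ t, t ∈ Icc a b →
      ρ' t ≤ ε t + ϵ + K₁ t * ρ t + K₂ t * √(ρ t) * ∫ s in a..t, √(ρ s)) :
    ∀ᵐ x, x ∈ Icc a b → deriv (sqrtEnergy a ϵ ρ ε) x ≤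
      (√ϵ / 2 + 2 * ((max (K₁ x / 2) (K₂ x / 2) + 1) * √((∫ τ in a..x, ε τ) + ϵ))) +
        (max (K₁ x / 2) (K₂ x / 2) + 1) * sqrtEnergy a ϵ ρ ε x := by
  have hF_cont := (hε.absolutelyContinuousOnInterval_intervalIntegral left_mem_uIcc).continuousOn
  have hy : IntervalIntegrable (fun t ↦ √(ρ t + (∫ τ in a..t, ε τ) + ϵ)) volume a b :=
    ((hρ.continuousOn.add hF_cont).add continuousOn_const).sqrt.intervalIntegrable
  have hsqrtρ : IntervalIntegrable (fun t ↦ √(ρ t)) volume a b :=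
    hρ.continuousOn.sqrt.intervalIntegrable
  filter_upwards [hρ', hε.ae_hasDerivAt_integral, hy.ae_hasDerivAt_integral, hineq]
    with x hρx hFx hJx hineqx hx
  have hxu : x ∈ uIcc a b := Icc_subset_uIcc hx
  have hFx_nonneg := integral_nonneg_of_nonneg_on_Icc hε_nonneg hx
  have hsub : uIcc a x ⊆ uIcc a b := uIcc_subset_uIcc_left hxu
  have hmemory : (∫ s in a..x, √(ρ s)) ≤ ∫ s in a..x, √(ρ s + (∫ τ in a..s, ε τ) + ϵ) :=
    intervalIntegral.integral_mono_on hx.1 (hsqrtρ.mono_set hsub) (hy.mono_set hsub) fun s hs ↦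
      Real.sqrt_le_sqrt (by
        have hs' : s ∈ Icc a b := ⟨hs.1, hs.2.trans hx.2⟩
        linarith [integral_nonneg_of_nonneg_on_Icc hε_nonneg hs', hρ_nonneg s hs'])
  have hderiv : HasDerivAt (sqrtEnergy a ϵ ρ ε) _ x :=
    ((((hρx hx).fun_add (hFx hxu a left_mem_uIcc)).add_const ϵ).sqrt
      (by linarith [hρ_nonneg x hx])).fun_add (hJx hxu a left_mem_uIcc) |>.fun_sub
      ((((hFx hxu a left_mem_uIcc).add_const ϵ).sqrt (by linarith)).const_mul 2)
  rw [hderiv.deriv]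
  exact sqrt_energy_rate_le (hρ_nonneg x hx) (hε_nonneg x hx) hϵ (hK₁ x hx)
    (intervalIntegral.integral_nonneg hx.1 fun _ _ ↦ Real.sqrt_nonneg _) hmemory
    (Real.sqrt_le_sqrt (by linarith)) (Real.sqrt_nonneg _)
    (by rw [Real.sq_sqrt (by linarith [hρ_nonneg x hx]), Real.sq_sqrt (by linarith)]; ring)
    (hineqx hx)

theorem sqrtEnergy_self : sqrtEnergy a ϵ ρ ε a = √(ρ a + ϵ) - 2 * √ϵ := by
  simp [sqrtEnergy]

theorem sqrt_le_sqrtEnergy_add (hϵ : 0 < ϵ) (hε_nonneg : ∀ s ∈ Icc a b, 0 ≤ ε s) {t : ℝ}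
    (ht : t ∈ Icc a b) : √(ρ t) ≤ sqrtEnergy a ϵ ρ ε t + 2 * √((∫ τ in a..t, ε τ) + ϵ) := by
  have := integral_nonneg_of_nonneg_on_Icc hε_nonneg ht
  have : 0 ≤ ∫ s in a..t, √(ρ s + (∫ τ in a..s, ε τ) + ϵ) :=
    intervalIntegral.integral_nonneg ht.1 fun s _ ↦ Real.sqrt_nonneg _
  have := Real.sqrt_le_sqrt (show ρ t ≤ ρ t + (∫ τ in a..t, ε τ) + ϵ by linarith)
  simp only [sqrtEnergy]
  linarith

theorem sqrtEnergy_le_gronwall {ρ' K₁ K₂ : ℝ → ℝ} (hϵ : 0 < ϵ)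
    (hρ : AbsolutelyContinuousOnInterval ρ a b) (hρ' : ∀ᵐ x, x ∈ Icc a b → HasDerivAt ρ (ρ' x) x)
    (hρ_nonneg : ∀ s ∈ Icc a b, 0 ≤ ρ s) (hε : IntervalIntegrable ε volume a b)
    (hε_nonneg : ∀ s ∈ Icc a b, 0 ≤ ε s) (hK₁ : IntervalIntegrable K₁ volume a b)
    (hK₁_nonneg : ∀ s ∈ Icc a b, 0 ≤ K₁ s) (hK₂ : IntervalIntegrable K₂ volume a b)
    (hineq : ∀ᵐ t, t ∈ Icc a b →
      ρ' t ≤ ε t + ϵ + K₁ t * ρ t + K₂ t * √(ρ t) * ∫ s in a..t, √(ρ s))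
    {t : ℝ} (ht : t ∈ Icc a b) :
    sqrtEnergy a ϵ ρ ε t ≤
      (√(ρ a + ϵ) - 2 * √ϵ) * Real.exp (∫ s in a..t, (max (K₁ s / 2) (K₂ s / 2) + 1)) +
        √ϵ / 2 * (∫ s in a..t, Real.exp (∫ τ in s..t, (max (K₁ τ / 2) (K₂ τ / 2) + 1))) +
        2 * ∫ s in a..t, (max (K₁ s / 2) (K₂ s / 2) + 1) *
          Real.exp (∫ τ in s..t, (max (K₁ τ / 2) (K₂ τ / 2) + 1)) * √((∫ τ in a..s, ε τ) + ϵ) := by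
  have hsub : uIcc a t ⊆ uIcc a b := uIcc_subset_uIcc_left (Icc_subset_uIcc ht)
  have hκ : IntervalIntegrable (fun s ↦ max (K₁ s / 2) (K₂ s / 2) + 1) volume a t :=
    IntervalIntegrable.add ⟨(hK₁.div_const 2).1.sup (hK₂.div_const 2).1,
      (hK₁.div_const 2).2.sup (hK₂.div_const 2).2⟩ intervalIntegrable_const |>.mono_set hsub
  have hE : ContinuousOn (fun s ↦ √((∫ τ in a..s, ε τ) + ϵ)) (uIcc a t) :=
    (((hε.mono_set hsub).absolutelyContinuousOnInterval_intervalIntegral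
      left_mem_uIcc).continuousOn.add continuousOn_const).sqrt
  have hG : ContinuousOn (fun s ↦ Real.exp (∫ τ in s..t, (max (K₁ τ / 2) (K₂ τ / 2) + 1)))
      (uIcc a t) :=
    (intervalIntegral.continuousOn_primitive_interval_left ((intervalIntegrable_iff').1 hκ)).rexp
  have hZ := (hρ.sqrtEnergy (ht.1.trans ht.2) hϵ hρ_nonneg hε hε_nonneg).mono hsub
  have hgronwall := hZ.le_gronwall_of_ae_deriv_le ht.1 hκ
    (intervalIntegrable_const.add ((hκ.mul_continuousOn hE).const_mul 2))
    ((ae_deriv_sqrtEnergy_le hϵ hρ hρ' hρ_nonneg hε hε_nonneg hK₁_nonneg hineq).mono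
      fun x hx hxt ↦ hx ⟨hxt.1, hxt.2.trans ht.2⟩)
  refine (sqrtEnergy_self (ρ := ρ) ▸ hgronwall).trans_eq ?_
  rw [← intervalIntegral.integral_const_mul, ← intervalIntegral.integral_const_mul, add_assoc,
    ← intervalIntegral.integral_add (hG.intervalIntegrable.const_mul _)
      (((hκ.mul_continuousOn hG).mul_continuousOn hE).const_mul _)]
  exact congrArg _ (intervalIntegral.integral_congr fun s _ ↦ by ring)

end SqrtEnergy

theorem gronwall_like_differential_inequality (T0 T : ℝ)
    (ρ ρ' K1 K2 ε : ℝ → ℝ) (ϵ : ℝ) (hϵ : 0 < ϵ)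
    (hρnn : ∀ t ∈ Icc T0 T, 0 ≤ ρ t)
    (hρint : IntervalIntegrable ρ' volume T0 T)
    (hρAC : ∀ t ∈ Icc T0 T, ρ t = ρ T0 + ∫ s in T0..t, ρ' s)
    (hK1int : IntervalIntegrable K1 volume T0 T) (hK1nn : ∀ t ∈ Icc T0 T, 0 ≤ K1 t)
    (hK2int : IntervalIntegrable K2 volume T0 T)
    (hεint : IntervalIntegrable ε volume T0 T) (hεnn : ∀ t ∈ Icc T0 T, 0 ≤ ε t)
    (hineq : ∀ᵐ t ∂volume, t ∈ Icc T0 T →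
      ρ' t ≤ ε t + ϵ + K1 t * ρ t + K2 t * Real.sqrt (ρ t) * ∫ s in T0..t, Real.sqrt (ρ s)) :
    ∀ t ∈ Icc T0 T,
      Real.sqrt (ρ t) ≤
        Real.sqrt (ρ T0 + ϵ) * Real.exp (∫ s in T0..t, (max (K1 s / 2) (K2 s / 2) + 1)) +
        Real.sqrt ϵ / 2 *
          (∫ s in T0..t, Real.exp (∫ τ in s..t, (max (K1 τ / 2) (K2 τ / 2) + 1))) +
        2 * (Real.sqrt ((∫ s in T0..t, ε s) + ϵ) -
          Real.sqrt ϵ * Real.exp (∫ τ in T0..t, (max (K1 τ / 2) (K2 τ / 2) + 1))) +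
        2 * ∫ s in T0..t, (max (K1 s / 2) (K2 s / 2) + 1) *
          Real.exp (∫ τ in s..t, (max (K1 τ / 2) (K2 τ / 2) + 1)) *
          Real.sqrt ((∫ τ in T0..s, ε τ) + ϵ) := by
  intro t ht
  have hρ := absolutelyContinuousOnInterval_of_eq_integral (ht.1.trans ht.2) hρint hρAC
  have := sqrtEnergy_le_gronwall hϵ hρ (ae_hasDerivAt_of_eq_integral hρint hρAC) hρnn hεint hεnn
    hK1int hK1nn hK2int hineq ht
  linarith [sqrt_le_sqrtEnergy_add (ρ := ρ) hϵ hεnn ht]
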